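/- Let Σ ⊂ ℝⁿ be a compact smooth embedded k-dimensional submanifold without boundary and let (p,q) : [0,T) → Σ × Σ be a chord shortening flow relative to Σ. Then at the endpoint p(t) the tangential conormal satisfies the evolution equation d/dt η^T(p) = −(η^T(p) − η^T(q))/ℓ + (1/ℓ)‖η^T‖² η^T(p) − W − (1/ℓ) P^N_p(η^T(q)) − A(η^T(p), η^T(p)), where: ℓ = ℓ(t) = |p(t)−q(t)|; P^N_p denotes the orthogonal projection of ℝⁿ onto the orthogonal complement of T_pΣ; η^N(p) = η(p) − η^T(p); A is the second fundamental form of Σ at p; and W is the unique vector in T_pΣ satisfying ⟨W, v⟩ = ⟨A(η^T(p), v), η^N(p)⟩ for all v ∈ T_pΣ (equivalently W = Σ_{i=1}^k ⟨A(η^T(p), e_i), η^N(p)⟩ e_i for any orthonormal basis {e_i} of T_pΣ). The same equation holds at q(t) with the roles of p and q interchanged. -/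

import Mathlib

open scoped RealInnerProductSpace ENNReal
open Set Filter

noncomputable section

/-- Euclidean `n`-space. -/
abbrev Euc (n : ℕ) := EuclideanSpace ℝ (Fin n)

/-- The orthogonal projection `π_K` onto a submodule `K`, as a map `Euc n → Euc n`. -/
def projSM {n : ℕ} (K : Submodule ℝ (Euc n)) (v : Euc n) : Euc n :=
  (K.orthogonalProjection v : Euc n)

/-- `S` is a smooth embedded `k`-dimensional submanifold (without boundary) of `ℝⁿ`,
whose tangent space at each `x ∈ S` is the `k`-dimensional subspace `T x ⊆ ℝⁿ`:
every point of `S` has a neighbourhood in `S` which is the image of a smooth injective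
parametrization, which is a homeomorphism onto its image, with injective differential whose
range is the assigned tangent space. -/
def IsSubmanifold (n k : ℕ) (S : Set (Euc n)) (T : Euc n → Submodule ℝ (Euc n)) : Prop :=
  ∀ x ∈ S, ∃ (f : Euc k → Euc n) (u : Set (Euc k)) (v : Set (Euc n)),
    IsOpen u ∧ IsOpen v ∧ x ∈ v ∧ ContDiffOn ℝ (⊤ : ℕ∞) f u ∧ Set.InjOn f u ∧
    f '' u = S ∩ v ∧
    (∀ s ⊆ u, IsOpen s → ∃ w : Set (Euc n), IsOpen w ∧ f '' s = S ∩ w) ∧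
    ∀ y ∈ u, Function.Injective (fderiv ℝ f y) ∧
      LinearMap.range ((fderiv ℝ f y) : Euc k →ₗ[ℝ] Euc n) = T (f y)

/-- The tangential part `η^T(x) = π_{T x}((x - y)/|x - y|)` of the outward unit conormal at `x`
of the chord from `x` to `y`. -/
def conormalT {n : ℕ} (T : Euc n → Submodule ℝ (Euc n)) (x y : Euc n) : Euc n :=
  projSM (T x) (‖x - y‖⁻¹ • (x - y))

/-- A chord shortening flow relative to `S` (with tangent spaces `T`) on the time domain `dom`:
a pair of C¹ curves `p q : dom → S` with `p t ≠ q t`, satisfying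
`p' = -π_{p}((p-q)/|p-q|)` and `q' = -π_{q}((q-p)/|q-p|)`. -/
def IsCSFOn {n : ℕ} (S : Set (Euc n)) (T : Euc n → Submodule ℝ (Euc n))
    (dom : Set ℝ) (p q : ℝ → Euc n) : Prop :=
  ∀ t ∈ dom, p t ∈ S ∧ q t ∈ S ∧ p t ≠ q t ∧
    HasDerivWithinAt p (-(conormalT T (p t) (q t))) dom t ∧
    HasDerivWithinAt q (-(conormalT T (q t) (p t))) dom t

/-- The time interval `[0, Tm)` (where possibly `Tm = ∞`). -/
def csfDomain (Tm : ℝ≥0∞) : Set ℝ := {t : ℝ | 0 ≤ t ∧ ENNReal.ofReal t < Tm}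

/-- A maximal chord shortening flow: one defined on `[0, Tm)` which cannot be extended to a
chord shortening flow on a strictly larger interval `[0, Tm')`. -/
def IsMaximalCSF {n : ℕ} (S : Set (Euc n)) (T : Euc n → Submodule ℝ (Euc n))
    (Tm : ℝ≥0∞) (p q : ℝ → Euc n) : Prop :=
  IsCSFOn S T (csfDomain Tm) p q ∧
  ∀ Tm' : ℝ≥0∞, Tm < Tm' → ∀ p' q' : ℝ → Euc n,
    IsCSFOn S T (csfDomain Tm') p' q' →
    ¬ (∀ t ∈ csfDomain Tm, p' t = p t ∧ q' t = q t)

/-!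
Near `p`, the projections `π_x` onto the tangent spaces extend to a field `P` of orthogonal
projections on an open set of `ℝⁿ`, differentiable at `p`: take `Df (Df† Df)⁻¹ Df†` for a chart
`f` and transport it by a local left inverse of `f`. Then `η^T(p) = P(p) η`, with derivative
`DP(p') η + P(p) η'`. Differentiating `P² = P` and `P† = P` shows that `DP_u` is symmetric and
exchanges tangent and normal vectors; hence `A(u, v) = DP_u v` for tangent `u, v`,
`W = DP_{η^T} η^N`, and `DP_{η^T} η = A(η^T, η^T) + W`. Finally `ℓ' = -‖η^T‖²` gives
`η' = ℓ⁻¹ (η^T(q) - η^T(p) + ‖η^T‖² η)`.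
-/

open scoped Topology

section RangeProjection

variable {E F : Type*} [NormedAddCommGroup E] [InnerProductSpace ℝ E] [CompleteSpace E]
  [NormedAddCommGroup F] [InnerProductSpace ℝ F] [CompleteSpace F]

open ContinuousLinearMap

/-- `ContinuousLinearMap.adjoint` is conjugate-linear; over `ℝ` it is a continuous linear map. -/
def realAdjoint : (E →L[ℝ] F) →L[ℝ] (F →L[ℝ] E) :=
  LinearMap.mkContinuous
    { toFun := adjoint
      map_add' := map_add _
      map_smul' := fun c B => by simp [adjoint.map_smulₛₗ] } 1
    (fun B => by simp)

/-- `Ring.inverse` is `0` at non-units: this is meaningful only when `B† B` is invertible. -/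
def rangeProjection (B : E →L[ℝ] F) : F →L[ℝ] F :=
  B ∘L Ring.inverse (adjoint B ∘L B) ∘L adjoint B

variable {B : E →L[ℝ] F}

lemma isUnit_adjoint_comp_self [FiniteDimensional ℝ E] (hB : Function.Injective B) :
    IsUnit (adjoint B ∘L B) := by
  have hinj : Function.Injective (adjoint B ∘L B) :=
    (adjoint_comp_self_injective_iff B).mpr hB
  exact isUnit_iff_bijective.mpr ⟨hinj, LinearMap.injective_iff_surjective.mp hinj⟩

lemma isOpen_setOf_isUnit_adjoint_comp_self :
    IsOpen {B : E →L[ℝ] F | IsUnit (adjoint B ∘L B)} := by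
  have : Continuous fun B : E →L[ℝ] F => adjoint B ∘L B :=
    (realAdjoint (E := E) (F := F)).continuous.clm_comp continuous_id
  exact Units.isOpen.preimage this

lemma adjoint_rangeProjection_apply (hB : IsUnit (adjoint B ∘L B)) (z : F) :
    adjoint B (rangeProjection B z) = adjoint B z := by
  have h : (adjoint B ∘L B) * Ring.inverse (adjoint B ∘L B) = 1 := Ring.mul_inverse_cancel _ hB
  exact congr($h (adjoint B z))

lemma rangeProjection_eq_starProjection [FiniteDimensional ℝ F] (hB : IsUnit (adjoint B ∘L B)) :
    rangeProjection B = (LinearMap.range (B : E →ₗ[ℝ] F)).starProjection := by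
  ext z
  symm
  refine Submodule.eq_starProjection_of_mem_of_inner_eq_zero ⟨_, rfl⟩ ?_
  rintro _ ⟨a, rfl⟩
  rw [coe_coe, ← adjoint_inner_left, map_sub, adjoint_rangeProjection_apply hB, sub_self,
    inner_zero_left]

lemma isSymmetricProjection_rangeProjection [FiniteDimensional ℝ F] (hB : IsUnit (adjoint B ∘L B)) :
    (rangeProjection B : F →ₗ[ℝ] F).IsSymmetricProjection := by
  rw [rangeProjection_eq_starProjection hB]
  exact Submodule.isSymmetricProjection_starProjection _

lemma differentiableAt_rangeProjection (hB : IsUnit (adjoint B ∘L B)) :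
    DifferentiableAt ℝ rangeProjection B := by
  have hA : DifferentiableAt ℝ (fun B : E →L[ℝ] F => adjoint B) B :=
    (realAdjoint (E := E) (F := F)).differentiableAt
  have hG : DifferentiableAt ℝ (fun B : E →L[ℝ] F => Ring.inverse (adjoint B ∘L B)) B :=
    (hA.clm_comp differentiableAt_id).inverse hB
  exact differentiableAt_id.clm_comp (hG.clm_comp hA)

end RangeProjection

theorem HasStrictFDerivAt.exists_leftInverse {𝕜 E F : Type*} [NontriviallyNormedField 𝕜]
    [NormedAddCommGroup E] [NormedSpace 𝕜 E] [CompleteSpace E]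
    [NormedAddCommGroup F] [NormedSpace 𝕜 F] {f : E → F} {f' : E →L[𝕜] F} {a : E}
    (hf : HasStrictFDerivAt f f' a) {L : F →L[𝕜] E} (hL : L ∘L f' = .id 𝕜 E) :
    ∃ g : F → E, DifferentiableAt 𝕜 g (f a) ∧ ∀ᶠ y in 𝓝 a, g (f y) = y := by
  have hLf : HasStrictFDerivAt (fun y => L (f y))
      ((ContinuousLinearEquiv.refl 𝕜 E : E ≃L[𝕜] E) : E →L[𝕜] E) a := by
    simpa [hL] using L.hasStrictFDerivAt.comp a hf
  exact ⟨fun z => hLf.localInverse _ _ a (L z),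
    hLf.to_localInverse.differentiableAt.comp (f a) L.differentiableAt,
    hLf.eventually_left_inverse⟩

section ProjectionValued

variable {E : Type*} [NormedAddCommGroup E] [InnerProductSpace ℝ E]
  {P : E → E →L[ℝ] E} {x₀ : E}

lemma hasFDerivAt_apply_const (hP : DifferentiableAt ℝ P x₀) (z : E) :
    HasFDerivAt (fun x => P x z) ((fderiv ℝ P x₀).flip z) x₀ := by
  simpa using hP.hasFDerivAt.clm_apply (hasFDerivAt_const z x₀)

lemma fderiv_apply_eq_of_isIdempotentElem (hP : DifferentiableAt ℝ P x₀)
    (hidem : ∀ᶠ x in 𝓝 x₀, IsIdempotentElem (P x)) (u z : E) :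
    fderiv ℝ P x₀ u z = P x₀ (fderiv ℝ P x₀ u z) + fderiv ℝ P x₀ u (P x₀ z) := by
  have hPP : HasFDerivAt (fun x => P x (P x z))
      (P x₀ ∘L (fderiv ℝ P x₀).flip z + (fderiv ℝ P x₀).flip (P x₀ z)) x₀ :=
    hP.hasFDerivAt.clm_apply (hasFDerivAt_apply_const hP z)
  have heq : (fun x => P x (P x z)) =ᶠ[𝓝 x₀] fun x => P x z :=
    hidem.mono fun x hx => congr($hx z)
  have := (hPP.congr_of_eventuallyEq heq.symm).unique (hasFDerivAt_apply_const hP z)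
  simpa using congr($this u).symm

lemma inner_fderiv_apply_comm (hP : DifferentiableAt ℝ P x₀)
    (hsym : ∀ᶠ x in 𝓝 x₀, (P x : E →ₗ[ℝ] E).IsSymmetric) (u a b : E) :
    ⟪fderiv ℝ P x₀ u a, b⟫ = ⟪a, fderiv ℝ P x₀ u b⟫ := by
  have hl := ((innerSL ℝ b).hasFDerivAt.comp x₀ (hasFDerivAt_apply_const hP a))
  have hr := ((innerSL ℝ a).hasFDerivAt.comp x₀ (hasFDerivAt_apply_const hP b))
  have heq : (fun x => ⟪b, P x a⟫) =ᶠ[𝓝 x₀] fun x => ⟪a, P x b⟫ :=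
    hsym.mono fun x hx => by
      simpa only [real_inner_comm b, ContinuousLinearMap.coe_coe] using hx a b
  have := (hl.congr_of_eventuallyEq heq.symm).unique hr
  simpa [real_inner_comm] using congr($this u)

end ProjectionValued

/-- An extension of `y ↦ π_{T y}` from `S` to a neighbourhood of `x₀` in `ℝⁿ`, so that it can be
differentiated at `x₀`. -/
structure IsProjectionFieldAt {n : ℕ} (S : Set (Euc n)) (T : Euc n → Submodule ℝ (Euc n))
    (P : Euc n → Euc n →L[ℝ] Euc n) (x₀ : Euc n) : Prop where
  differentiableAt : DifferentiableAt ℝ P x₀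
  isSymmetricProjection : ∀ᶠ x in 𝓝 x₀, (P x : Euc n →ₗ[ℝ] Euc n).IsSymmetricProjection
  eq_starProjection : ∀ᶠ y in 𝓝 x₀, y ∈ S → P y = (T y).starProjection

open ContinuousLinearMap in
theorem IsSubmanifold.exists_isProjectionFieldAt {n k : ℕ} {S : Set (Euc n)}
    {T : Euc n → Submodule ℝ (Euc n)} (hsub : IsSubmanifold n k S T) {x₀ : Euc n}
    (hx₀ : x₀ ∈ S) : ∃ P, IsProjectionFieldAt S T P x₀ := by
  obtain ⟨f, u, v, hu, -, hx₀v, hf, -, himg, hopen, htan⟩ := hsub x₀ hx₀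
  obtain ⟨y₀, hy₀, rfl⟩ : x₀ ∈ f '' u := himg ▸ ⟨hx₀, hx₀v⟩
  set B := fderiv ℝ f
  have hgram : ∀ y ∈ u, IsUnit (adjoint (B y) ∘L B y) := fun y hy =>
    isUnit_adjoint_comp_self (htan y hy).1
  have hfy₀ : ContDiffAt ℝ (⊤ : ℕ∞) f y₀ := hf.contDiffAt (hu.mem_nhds hy₀)
  have hB : DifferentiableAt ℝ B y₀ :=
    (hfy₀.fderiv_right (m := 1) (by norm_cast)).differentiableAt one_ne_zero
  have hL : (Ring.inverse (adjoint (B y₀) ∘L B y₀) ∘L adjoint (B y₀)) ∘L B y₀ = .id ℝ _ :=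
    Ring.inverse_mul_cancel _ (hgram y₀ hy₀)
  obtain ⟨g, hg, hgf⟩ :=
    (hfy₀.hasStrictFDerivAt (by simp)).exists_leftInverse hL
  have hgy₀ : g (f y₀) = y₀ := hgf.self_of_nhds
  have hBg : DifferentiableAt ℝ (fun x => B (g x)) (f y₀) :=
    DifferentiableAt.comp (f y₀) (by rwa [hgy₀]) hg
  have hgram₀ : IsUnit (adjoint (B (g (f y₀))) ∘L B (g (f y₀))) := by
    rw [hgy₀]; exact hgram y₀ hy₀
  refine ⟨fun x => rangeProjection (B (g x)), ⟨?_, ?_, ?_⟩⟩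
  · exact (differentiableAt_rangeProjection hgram₀).comp (f y₀) hBg
  · have : ∀ᶠ x in 𝓝 (f y₀), IsUnit (adjoint (B (g x)) ∘L B (g x)) :=
      hBg.continuousAt.preimage_mem_nhds
        (isOpen_setOf_isUnit_adjoint_comp_self.mem_nhds hgram₀)
    exact this.mono fun x hx => isSymmetricProjection_rangeProjection hx
  · obtain ⟨u₀, hu₀, hu₀open, hy₀u₀⟩ := mem_nhds_iff.mp (inter_mem (hu.mem_nhds hy₀) hgf)
    obtain ⟨w, hw, hw_img⟩ := hopen u₀ (fun y hy => (hu₀ hy).1) hu₀open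
    have hx₀w : f y₀ ∈ w := (hw_img ▸ mem_image_of_mem f hy₀u₀ : f y₀ ∈ S ∩ w).2
    filter_upwards [hw.mem_nhds hx₀w] with x hxw hxS
    obtain ⟨y, hy, rfl⟩ : x ∈ f '' u₀ := hw_img ▸ ⟨hxS, hxw⟩
    rw [(hu₀ hy).2, rangeProjection_eq_starProjection (hgram y (hu₀ hy).1), (htan y (hu₀ hy).1).2]

def IsSecondFundamentalFormAt {n : ℕ} (S : Set (Euc n)) (T : Euc n → Submodule ℝ (Euc n))
    (B : Euc n → Euc n → Euc n) (x : Euc n) : Prop :=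
  ∀ u v : Euc n, u ∈ T x → v ∈ T x →
    ∀ V : Euc n → Euc n, DifferentiableAt ℝ V x → (∀ y ∈ S, V y ∈ T y) → V x = v →
      B u v = fderiv ℝ V x u - projSM (T x) (fderiv ℝ V x u)

namespace IsProjectionFieldAt

variable {n : ℕ} {S : Set (Euc n)} {T : Euc n → Submodule ℝ (Euc n)}
  {P : Euc n → Euc n →L[ℝ] Euc n} {x₀ : Euc n}

lemma apply_self (hP : IsProjectionFieldAt S T P x₀) (hx₀ : x₀ ∈ S) :
    P x₀ = (T x₀).starProjection :=
  hP.eq_starProjection.self_of_nhds hx₀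

lemma fderiv_apply_eq (hP : IsProjectionFieldAt S T P x₀) (u z : Euc n) :
    fderiv ℝ P x₀ u z = P x₀ (fderiv ℝ P x₀ u z) + fderiv ℝ P x₀ u (P x₀ z) :=
  fderiv_apply_eq_of_isIdempotentElem hP.differentiableAt
    (hP.isSymmetricProjection.mono fun _ h => ContinuousLinearMap.coe_injective h.isIdempotentElem)
    u z

lemma starProjection_fderiv_apply_of_mem (hP : IsProjectionFieldAt S T P x₀) (hx₀ : x₀ ∈ S)
    {v : Euc n} (hv : v ∈ T x₀) (u : Euc n) :
    (T x₀).starProjection (fderiv ℝ P x₀ u v) = 0 := by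
  have h := hP.fderiv_apply_eq u v
  rw [hP.apply_self hx₀, Submodule.starProjection_eq_self_iff.mpr hv] at h
  simpa using h

lemma starProjection_fderiv_apply_of_mem_orthogonal (hP : IsProjectionFieldAt S T P x₀)
    (hx₀ : x₀ ∈ S) {ν : Euc n} (hν : ν ∈ (T x₀)ᗮ) (u : Euc n) :
    (T x₀).starProjection (fderiv ℝ P x₀ u ν) = fderiv ℝ P x₀ u ν := by
  have h := hP.fderiv_apply_eq u ν
  rw [hP.apply_self hx₀, (Submodule.starProjection_apply_eq_zero_iff _).mpr hν, map_zero,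
    add_zero] at h
  exact h.symm

/-- The field `y ↦ π_y v` is tangent to `S` and equals `P y v` near `x₀`. -/
theorem secondFundamentalForm_eq (hP : IsProjectionFieldAt S T P x₀) (hx₀ : x₀ ∈ S)
    {B : Euc n → Euc n → Euc n} (hB : IsSecondFundamentalFormAt S T B x₀) {u v : Euc n}
    (hu : u ∈ T x₀) (hv : v ∈ T x₀) : B u v = fderiv ℝ P x₀ u v := by
  classical
  set V : Euc n → Euc n := fun y => if y ∈ S then (T y).starProjection v else P y v
  have hV : V =ᶠ[𝓝 x₀] fun y => P y v :=
    hP.eq_starProjection.mono fun y hy => by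
      by_cases hyS : y ∈ S
      · simp [V, hyS, hy hyS]
      · simp [V, hyS]
  have hVd : HasFDerivAt V ((fderiv ℝ P x₀).flip v) x₀ :=
    (hasFDerivAt_apply_const hP.differentiableAt v).congr_of_eventuallyEq hV
  have hVS : ∀ y ∈ S, V y ∈ T y := fun y hy => by
    simp only [V, if_pos hy]; exact Submodule.starProjection_apply_mem _ _
  have hVx₀ : V x₀ = v := by simp [V, hx₀, Submodule.starProjection_eq_self_iff.mpr hv]
  rw [hB u v hu hv V hVd.differentiableAt hVS hVx₀, hVd.fderiv]
  simpa [projSM] using hP.starProjection_fderiv_apply_of_mem hx₀ hv u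

theorem weingarten_eq (hP : IsProjectionFieldAt S T P x₀) (hx₀ : x₀ ∈ S)
    {B : Euc n → Euc n → Euc n} (hB : IsSecondFundamentalFormAt S T B x₀) {u ν W : Euc n}
    (hu : u ∈ T x₀) (hν : ν ∈ (T x₀)ᗮ) (hW : W ∈ T x₀)
    (hWB : ∀ v ∈ T x₀, ⟪W, v⟫ = ⟪B u v, ν⟫) : W = fderiv ℝ P x₀ u ν := by
  rw [← hP.starProjection_fderiv_apply_of_mem_orthogonal hx₀ hν u]
  refine (Submodule.eq_starProjection_of_mem_of_inner_eq_zero hW fun v hv => ?_).symm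
  rw [inner_sub_left, real_inner_comm, hWB v hv, hP.secondFundamentalForm_eq hx₀ hB hu hv,
    inner_fderiv_apply_comm hP.differentiableAt
      (hP.isSymmetricProjection.mono fun _ h => h.isSymmetric), sub_self]

end IsProjectionFieldAt

lemma HasDerivWithinAt.inv_norm_smul {F : Type*} [NormedAddCommGroup F] [InnerProductSpace ℝ F]
    {r : ℝ → F} {r' : F} {s : Set ℝ} {t : ℝ} (hr : HasDerivWithinAt r r' s t) (h0 : r t ≠ 0) :
    HasDerivWithinAt (fun τ => ‖r τ‖⁻¹ • r τ)
      (‖r t‖⁻¹ • (r' - ⟪‖r t‖⁻¹ • r t, r'⟫ • ‖r t‖⁻¹ • r t)) s t := by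
  have hℓ0 : ‖r t‖ ≠ 0 := norm_ne_zero_iff.mpr h0
  have hℓ : HasDerivWithinAt (fun τ => ‖r τ‖) (⟪r t, r'⟫ / ‖r t‖) s t := by
    have h := hr.norm_sq.sqrt (pow_ne_zero 2 hℓ0)
    simp only [Real.sqrt_sq (norm_nonneg _)] at h
    exact h.congr_deriv (by ring)
  refine ((hℓ.inv hℓ0).smul hr).congr_deriv ?_
  rw [real_inner_smul_left]
  simp only [Pi.inv_apply]
  module

lemma Submodule.inner_starProjection_self {E : Type*} [NormedAddCommGroup E]
    [InnerProductSpace ℝ E] (K : Submodule ℝ E) [K.HasOrthogonalProjection] (v : E) :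
    ⟪v, K.starProjection v⟫ = ‖K.starProjection v‖ ^ 2 := by
  rw [← real_inner_self_eq_norm_sq, K.inner_starProjection_left_eq_right,
    K.starProjection_eq_self_iff.mpr (K.starProjection_apply_mem v)]

section ChordShorteningFlow

variable {n : ℕ} {S : Set (Euc n)} {T : Euc n → Submodule ℝ (Euc n)} {dom : Set ℝ}
  {p q : ℝ → Euc n} {t : ℝ}

lemma conormalT_swap (x y : Euc n) :
    conormalT T y x = (T y).starProjection (-(‖x - y‖⁻¹ • (x - y))) := by
  rw [conormalT, projSM, norm_sub_rev, ← smul_neg, neg_sub]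
  rfl

lemma hasDerivWithinAt_unitChord (hne : p t ≠ q t)
    (hp : HasDerivWithinAt p (-conormalT T (p t) (q t)) dom t)
    (hq : HasDerivWithinAt q (-conormalT T (q t) (p t)) dom t) :
    HasDerivWithinAt (fun s => ‖p s - q s‖⁻¹ • (p s - q s))
      (‖p t - q t‖⁻¹ • (conormalT T (q t) (p t) - conormalT T (p t) (q t)
        + (‖conormalT T (p t) (q t)‖ ^ 2 + ‖conormalT T (q t) (p t)‖ ^ 2) •
          ‖p t - q t‖⁻¹ • (p t - q t))) dom t := by
  set u := ‖p t - q t‖⁻¹ • (p t - q t)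
  have hp_inner : ⟪u, conormalT T (p t) (q t)⟫ = ‖conormalT T (p t) (q t)‖ ^ 2 :=
    (T (p t)).inner_starProjection_self u
  have hq_inner : ⟪u, conormalT T (q t) (p t)⟫ = -‖conormalT T (q t) (p t)‖ ^ 2 := by
    rw [conormalT_swap, ← (T (q t)).inner_starProjection_self, inner_neg_left, neg_neg]
  refine ((hp.sub hq).inv_norm_smul (sub_ne_zero.mpr hne)).congr_deriv ?_
  rw [Pi.sub_apply, neg_sub_neg, inner_sub_right, hp_inner, hq_inner]
  module

lemma IsProjectionFieldAt.hasDerivWithinAt_projSM_comp {P : Euc n → Euc n →L[ℝ] Euc n}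
    (hP : IsProjectionFieldAt S T P (p t)) (hpS : ∀ s ∈ dom, p s ∈ S) (ht : t ∈ dom)
    {p' : Euc n} (hp : HasDerivWithinAt p p' dom t) {u : ℝ → Euc n} {u' : Euc n}
    (hu : HasDerivWithinAt u u' dom t) :
    HasDerivWithinAt (fun s => projSM (T (p s)) (u s))
      (fderiv ℝ P (p t) p' (u t) + P (p t) u') dom t := by
  have hPp : HasDerivWithinAt (fun s => P (p s)) (fderiv ℝ P (p t) p') dom t :=
    hP.differentiableAt.hasFDerivAt.comp_hasDerivWithinAt t hp
  refine (hPp.clm_apply hu).congr_of_eventuallyEq_of_mem ?_ ht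
  filter_upwards [hp.continuousWithinAt.eventually hP.eq_starProjection, self_mem_nhdsWithin]
    with s hs hsdom
  rw [hs (hpS s hsdom)]
  rfl

end ChordShorteningFlow

theorem IsSubmanifold.hasDerivWithinAt_conormalT {n k : ℕ} {S : Set (Euc n)}
    {T : Euc n → Submodule ℝ (Euc n)} (hsub : IsSubmanifold n k S T) {dom : Set ℝ}
    {p q : ℝ → Euc n} (hpS : ∀ s ∈ dom, p s ∈ S) {t : ℝ} (ht : t ∈ dom) (hne : p t ≠ q t)
    (hp : HasDerivWithinAt p (-conormalT T (p t) (q t)) dom t)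
    (hq : HasDerivWithinAt q (-conormalT T (q t) (p t)) dom t)
    {A : Euc n → Euc n → Euc n} (hA : IsSecondFundamentalFormAt S T A (p t)) {W : Euc n}
    (hW : W ∈ T (p t)) (hWA : ∀ v ∈ T (p t), ⟪W, v⟫ = ⟪A (conormalT T (p t) (q t)) v,
      ‖p t - q t‖⁻¹ • (p t - q t) - conormalT T (p t) (q t)⟫) :
    HasDerivWithinAt (fun s => conormalT T (p s) (q s))
      (-(‖p t - q t‖⁻¹ • (conormalT T (p t) (q t) - conormalT T (q t) (p t)))
        + (‖p t - q t‖⁻¹ * (‖conormalT T (p t) (q t)‖ ^ 2 + ‖conormalT T (q t) (p t)‖ ^ 2)) •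
            conormalT T (p t) (q t)
        - W
        - ‖p t - q t‖⁻¹ •
            (conormalT T (q t) (p t) - projSM (T (p t)) (conormalT T (q t) (p t)))
        - A (conormalT T (p t) (q t)) (conormalT T (p t) (q t))) dom t := by
  have hpt := hpS t ht
  obtain ⟨P, hP⟩ := hsub.exists_isProjectionFieldAt hpt
  refine (hP.hasDerivWithinAt_projSM_comp hpS ht hp (hasDerivWithinAt_unitChord hne hp hq)
    ).congr_deriv ?_
  set u := ‖p t - q t‖⁻¹ • (p t - q t)
  set ηT := conormalT T (p t) (q t)
  set κ := conormalT T (q t) (p t)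
  have hPu : P (p t) u = ηT := by rw [hP.apply_self hpt]; rfl
  have hηT : ηT ∈ T (p t) := (T (p t)).starProjection_apply_mem u
  have hPηT : P (p t) ηT = ηT := by
    rw [hP.apply_self hpt, Submodule.starProjection_eq_self_iff.mpr hηT]
  have hPκ : P (p t) κ = projSM (T (p t)) κ := by rw [hP.apply_self hpt]; rfl
  have hW_eq : W = fderiv ℝ P (p t) ηT (u - ηT) :=
    hP.weingarten_eq hpt hA hηT ((T (p t)).sub_starProjection_mem_orthogonal u) hW hWA
  rw [hW_eq, hP.secondFundamentalForm_eq hpt hA hηT hηT]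
  simp only [map_neg, neg_apply, map_add, map_sub, map_smul, hPu, hPηT, hPκ]
  module

theorem chord_statement_5_general (n k : ℕ) (S : Set (Euc n)) (T : Euc n → Submodule ℝ (Euc n))
    (hsub : IsSubmanifold n k S T)
    (Tm : ℝ≥0∞) (p q : ℝ → Euc n) (hflow : IsCSFOn S T (csfDomain Tm) p q)
    (A : Euc n → Euc n → Euc n → Euc n)
    (hA : ∀ x ∈ S, ∀ u v : Euc n, u ∈ T x → v ∈ T x →
      ∀ V : Euc n → Euc n, DifferentiableAt ℝ V x → (∀ y ∈ S, V y ∈ T y) → V x = v →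
        A x u v = fderiv ℝ V x u - projSM (T x) (fderiv ℝ V x u))
    (Wp Wq : ℝ → Euc n)
    (hWp : ∀ t ∈ csfDomain Tm, Wp t ∈ T (p t) ∧ ∀ v ∈ T (p t),
      ⟪Wp t, v⟫ = ⟪A (p t) (conormalT T (p t) (q t)) v,
        ‖p t - q t‖⁻¹ • (p t - q t) - conormalT T (p t) (q t)⟫)
    (hWq : ∀ t ∈ csfDomain Tm, Wq t ∈ T (q t) ∧ ∀ v ∈ T (q t),
      ⟪Wq t, v⟫ = ⟪A (q t) (conormalT T (q t) (p t)) v,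
        ‖q t - p t‖⁻¹ • (q t - p t) - conormalT T (q t) (p t)⟫) :
    ∀ t ∈ csfDomain Tm,
      HasDerivWithinAt (fun s => conormalT T (p s) (q s))
        (-(‖p t - q t‖⁻¹ • (conormalT T (p t) (q t) - conormalT T (q t) (p t)))
          + (‖p t - q t‖⁻¹ * (‖conormalT T (p t) (q t)‖ ^ 2 + ‖conormalT T (q t) (p t)‖ ^ 2)) •
              conormalT T (p t) (q t)
          - Wp t
          - ‖p t - q t‖⁻¹ •
              (conormalT T (q t) (p t) - projSM (T (p t)) (conormalT T (q t) (p t)))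
          - A (p t) (conormalT T (p t) (q t)) (conormalT T (p t) (q t)))
        (csfDomain Tm) t ∧
      HasDerivWithinAt (fun s => conormalT T (q s) (p s))
        (-(‖q t - p t‖⁻¹ • (conormalT T (q t) (p t) - conormalT T (p t) (q t)))
          + (‖q t - p t‖⁻¹ * (‖conormalT T (p t) (q t)‖ ^ 2 + ‖conormalT T (q t) (p t)‖ ^ 2)) •
              conormalT T (q t) (p t)
          - Wq t
          - ‖q t - p t‖⁻¹ •
              (conormalT T (p t) (q t) - projSM (T (q t)) (conormalT T (p t) (q t)))
          - A (q t) (conormalT T (q t) (p t)) (conormalT T (q t) (p t)))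
        (csfDomain Tm) t := by
  intro t ht
  obtain ⟨hpt, hqt, hne, hp, hq⟩ := hflow t ht
  refine ⟨hsub.hasDerivWithinAt_conormalT (fun s hs => (hflow s hs).1) ht hne hp hq
    (hA (p t) hpt) (hWp t ht).1 (hWp t ht).2, ?_⟩
  rw [add_comm (‖conormalT T (p t) (q t)‖ ^ 2)]
  exact hsub.hasDerivWithinAt_conormalT (fun s hs => (hflow s hs).2.1) ht hne.symm hq hp
    (hA (q t) hqt) (hWq t ht).1 (hWq t ht).2

/-- **Evolution of the tangential conormal.** Under the chord shortening flow,
`d/dt η^T(p) = -(η^T(p) - η^T(q))/ℓ + (1/ℓ)‖η^T‖² η^T(p) - W_p - (1/ℓ)P^N_p(η^T(q))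
 - A(η^T(p), η^T(p))`, and symmetrically at `q`.  Here `A` is the second fundamental form
(characterized by `A(u,v) = ` the normal part of `D_u V` for any differentiable vector field `V`
tangent to `S` with `V x = v`), and `W_p ∈ T_pΣ` is the Weingarten-type vector determined by
`⟨W_p, v⟩ = ⟨A(η^T(p), v), η^N(p)⟩` for all tangent `v`. -/
theorem chord_statement_5 (n k : ℕ) (S : Set (Euc n)) (T : Euc n → Submodule ℝ (Euc n))
    (hsub : IsSubmanifold n k S T) (hcpt : IsCompact S)
    (Tm : ℝ≥0∞) (p q : ℝ → Euc n) (hflow : IsCSFOn S T (csfDomain Tm) p q)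
    (A : Euc n → Euc n → Euc n → Euc n)
    (hA : ∀ x ∈ S, ∀ u v : Euc n, u ∈ T x → v ∈ T x →
      ∀ V : Euc n → Euc n, DifferentiableAt ℝ V x → (∀ y ∈ S, V y ∈ T y) → V x = v →
        A x u v = fderiv ℝ V x u - projSM (T x) (fderiv ℝ V x u))
    (Wp Wq : ℝ → Euc n)
    (hWp : ∀ t ∈ csfDomain Tm, Wp t ∈ T (p t) ∧ ∀ v ∈ T (p t),
      ⟪Wp t, v⟫ = ⟪A (p t) (conormalT T (p t) (q t)) v,
        ‖p t - q t‖⁻¹ • (p t - q t) - conormalT T (p t) (q t)⟫)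
    (hWq : ∀ t ∈ csfDomain Tm, Wq t ∈ T (q t) ∧ ∀ v ∈ T (q t),
      ⟪Wq t, v⟫ = ⟪A (q t) (conormalT T (q t) (p t)) v,
        ‖q t - p t‖⁻¹ • (q t - p t) - conormalT T (q t) (p t)⟫) :
    ∀ t ∈ csfDomain Tm,
      HasDerivWithinAt (fun s => conormalT T (p s) (q s))
        (-(‖p t - q t‖⁻¹ • (conormalT T (p t) (q t) - conormalT T (q t) (p t)))
          + (‖p t - q t‖⁻¹ * (‖conormalT T (p t) (q t)‖ ^ 2 + ‖conormalT T (q t) (p t)‖ ^ 2)) •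
              conormalT T (p t) (q t)
          - Wp t
          - ‖p t - q t‖⁻¹ •
              (conormalT T (q t) (p t) - projSM (T (p t)) (conormalT T (q t) (p t)))
          - A (p t) (conormalT T (p t) (q t)) (conormalT T (p t) (q t)))
        (csfDomain Tm) t ∧
      HasDerivWithinAt (fun s => conormalT T (q s) (p s))
        (-(‖q t - p t‖⁻¹ • (conormalT T (q t) (p t) - conormalT T (p t) (q t)))
          + (‖q t - p t‖⁻¹ * (‖conormalT T (p t) (q t)‖ ^ 2 + ‖conormalT T (q t) (p t)‖ ^ 2)) •
              conormalT T (q t) (p t)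
          - Wq t
          - ‖q t - p t‖⁻¹ •
              (conormalT T (p t) (q t) - projSM (T (q t)) (conormalT T (p t) (q t)))
          - A (q t) (conormalT T (q t) (p t)) (conormalT T (q t) (p t)))
        (csfDomain Tm) t :=
  chord_statement_5_general n k S T hsub Tm p q hflow A hA Wp Wq hWp hWq

end
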